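/- Let (R, m) be a finite local ring with principal maximal ideal m = (m₀), residue field of cardinality q, and index of nilpotency e = q + 1. Then Z(m) = (x, m₀)^e + (x^q - m₀^{q-1} x). -/

import Mathlib

open Polynomial IsLocalRing

/-- The ideal of polynomials in `R[X]` mapping every element of `S` into the ideal `I`. -/
def zeroFunctionsInto {R : Type*} [CommRing R] (S : Set R) (I : Ideal R) : Ideal R[X] where
  carrier := {f | ∀ s ∈ S, f.eval s ∈ I}
  add_mem' := fun hf hg s hs => by simpa using I.add_mem (hf s hs) (hg s hs)
  zero_mem' := fun s _ => by simp
  smul_mem' := fun c f hf s hs => by simpa using I.mul_mem_left (c.eval s) (hf s hs)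

/-- The ideal of polynomials vanishing on the subset `S`. -/
def zeroFunctions {R : Type*} [CommRing R] (S : Set R) : Ideal R[X] :=
  zeroFunctionsInto S ⊥

/-! Every `z ∈ m` is `m₀ t`, and `t ^ q ≡ t` modulo `m`, so `z ^ q - m₀ ^ (q - 1) z =
m₀ ^ q (t ^ q - t) ∈ m ^ (q + 1) = 0`; and `(x, m₀) ^ (q + 1)` evaluates into `m ^ (q + 1) = 0`
on `m`. Conversely, reduce `f ∈ Z(m)` modulo the monic `x ^ q - m₀ ^ (q - 1) x` to `r` of degree
`< q`. Then `r(m₀ x)` vanishes on all of `R`; lifts of the `q` residue classes have unit pairwise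
differences, so its Vandermonde matrix is invertible and its coefficients `rᵢ m₀ ^ i` vanish.
Since `m ^ q ≠ 0` this gives `rᵢ ∈ m ^ (q + 1 - i)`, i.e. `r ∈ (x, m₀) ^ (q + 1)`. -/

theorem mem_zeroFunctions {R : Type*} [CommRing R] {S : Set R} {f : R[X]} :
    f ∈ zeroFunctions S ↔ ∀ s ∈ S, f.eval s = 0 :=
  forall₂_congr fun _ _ => Ideal.mem_bot

namespace Polynomial

variable {R : Type*} [CommRing R]

theorem eq_zero_of_natDegree_lt_of_eval_eq_zero_of_isUnit_sub {n : ℕ} {f : R[X]}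
    (v : Fin n → R) (hv : Pairwise fun i j => IsUnit (v i - v j)) (hf : f.natDegree < n)
    (heval : ∀ i, f.eval (v i) = 0) : f = 0 := by
  have hdet : (Matrix.vandermonde v).det ∈ nonZeroDivisors R := by
    refine IsUnit.mem_nonZeroDivisors ?_
    rw [Matrix.det_vandermonde]
    exact IsUnit.prod_univ_iff.mpr fun i => IsUnit.prod_iff.mpr fun j hj =>
      hv (Finset.mem_Ioi.mp hj).ne'
  have hcoeff : (fun i : Fin n => f.coeff i) = 0 := by
    refine Matrix.eq_zero_of_det_mem_nonZeroDivisors_of_mulVec_eq_zero hdet ?_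
    ext i
    rw [Pi.zero_apply, ← heval i, eval_eq_sum_range' hf, ← Fin.sum_univ_eq_sum_range]
    simp [Matrix.mulVec, dotProduct, Matrix.vandermonde_apply, mul_comm]
  ext i
  rcases lt_or_ge i n with hi | hi
  · exact congrFun hcoeff ⟨i, hi⟩
  · exact coeff_eq_zero_of_natDegree_lt (hf.trans_le hi)

theorem mem_span_X_C_pow_of_coeff_mem {a : R} {n : ℕ} {f : R[X]}
    (h : ∀ i, f.coeff i ∈ Ideal.span {a} ^ (n - i)) : f ∈ Ideal.span {X, C a} ^ n := by
  rw [f.as_sum_range]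
  refine Ideal.sum_mem _ fun i _ => ?_
  obtain ⟨u, hu⟩ := Ideal.mem_span_singleton.mp (Ideal.span_singleton_pow a (n - i) ▸ h i)
  have hX : (X : R[X]) ∈ Ideal.span {X, C a} := Ideal.subset_span (by simp)
  have hC : C a ∈ Ideal.span {X, C a} := Ideal.subset_span (by simp)
  have hmem := Ideal.mul_mem_mul (Ideal.pow_mem_pow hC (n - i)) (Ideal.pow_mem_pow hX i)
  rw [← pow_add] at hmem
  rw [← C_mul_X_pow_eq_monomial, hu, C_mul, C_pow, mul_right_comm]
  exact Ideal.mul_mem_right _ _ (Ideal.pow_le_pow_right (by omega) hmem)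

theorem monic_X_pow_sub_C_mul_X {n : ℕ} (hn : 1 < n) (a : R) : (X ^ n - C a * X).Monic :=
  monic_X_pow_sub ((degree_C_mul_X_le a).trans_lt (by exact_mod_cast hn))

theorem natDegree_X_pow_sub_C_mul_X [Nontrivial R] {n : ℕ} (hn : 1 < n) (a : R) :
    (X ^ n - C a * X).natDegree = n := by
  rw [natDegree_sub_eq_left_of_natDegree_lt] <;> rw [natDegree_X_pow]
  exact ((natDegree_C_mul_le _ _).trans natDegree_X_le).trans_lt hn

theorem eval_mem_pow_of_mem_span_X_C_pow {I : Ideal R} {a z : R} (ha : a ∈ I) (hz : z ∈ I)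
    {n : ℕ} {f : R[X]} (hf : f ∈ Ideal.span {X, C a} ^ n) : f.eval z ∈ I ^ n := by
  have hmap := Ideal.mem_map_of_mem (evalRingHom z) hf
  rw [Ideal.map_pow, Ideal.map_span] at hmap
  refine Ideal.pow_right_mono (Ideal.span_le.mpr ?_) n hmap
  rintro _ ⟨g, hg | hg, rfl⟩ <;> simp_all

end Polynomial

namespace IsLocalRing

variable {R : Type*} [CommRing R] [IsLocalRing R]

theorem eq_zero_of_forall_eval_zero_of_natDegree_lt_card {f : R[X]}
    (hf : f.natDegree < Nat.card (ResidueField R)) (h : ∀ t, f.eval t = 0) : f = 0 := by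
  have : Finite (ResidueField R) := Nat.finite_of_card_ne_zero (by omega)
  let lift := Function.surjInv (residue_surjective (R := R))
  let v := lift ∘ (Finite.equivFin (ResidueField R)).symm
  refine eq_zero_of_natDegree_lt_of_eval_eq_zero_of_isUnit_sub v (fun i j hij => ?_) hf
    fun i => h _
  show IsUnit _
  rw [← residue_ne_zero_iff_isUnit, map_sub, sub_ne_zero]
  simpa [v, lift, Function.surjInv_eq] using hij

theorem pow_card_residueField_sub_mem [Finite (ResidueField R)] (t : R) :
    t ^ Nat.card (ResidueField R) - t ∈ maximalIdeal R := by
  have := Fintype.ofFinite (ResidueField R)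
  rw [← residue_eq_zero_iff, map_sub, map_pow, Nat.card_eq_fintype_card, FiniteField.pow_card,
    sub_self]

variable {m₀ : R} (hm : maximalIdeal R = Ideal.span {m₀})
include hm

theorem mem_maximalIdeal_pow_of_pow_mul_eq_zero {n : ℕ} (hn : m₀ ^ n ≠ 0) {i j : ℕ}
    (hij : i + j = n + 1) {x : R} (hx : m₀ ^ i * x = 0) : x ∈ maximalIdeal R ^ j := by
  induction j generalizing i with
  | zero => simp
  | succ j ih =>
    have hx' : m₀ ^ (i + 1) * x = 0 := by rw [pow_succ', mul_assoc, hx, mul_zero]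
    obtain ⟨y, rfl⟩ := Ideal.mem_span_singleton.mp
      (Ideal.span_singleton_pow m₀ j ▸ hm ▸ ih (by omega) hx')
    have hy : y ∈ maximalIdeal R := by
      refine (mem_maximalIdeal _).mpr fun hunit => hn ?_
      rw [← mul_assoc, ← pow_add, show i + j = n by omega] at hx
      exact hunit.mul_left_eq_zero.mp hx
    rw [pow_succ]
    exact Ideal.mul_mem_mul (Ideal.pow_mem_pow (hm ▸ Ideal.mem_span_singleton_self m₀) j) hy

theorem eval_X_pow_sub_C_mul_X_eq_zero [Finite (ResidueField R)]
    (hnil : maximalIdeal R ^ (Nat.card (ResidueField R) + 1) = ⊥)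
    {z : R} (hz : z ∈ maximalIdeal R) :
    (X ^ Nat.card (ResidueField R) - C (m₀ ^ (Nat.card (ResidueField R) - 1)) * X).eval z = 0 := by
  set q := Nat.card (ResidueField R)
  have hq : 0 < q := Nat.card_pos
  obtain ⟨t, rfl⟩ := Ideal.mem_span_singleton.mp (hm ▸ hz)
  have hfactor : (m₀ * t) ^ q - m₀ ^ (q - 1) * (m₀ * t) = m₀ ^ q * (t ^ q - t) := by
    rw [mul_pow, mul_sub, ← mul_assoc, ← pow_succ, Nat.sub_add_cancel hq]
  have hmem : m₀ ^ q * (t ^ q - t) ∈ maximalIdeal R ^ (q + 1) :=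
    pow_succ (maximalIdeal R) q ▸ Ideal.mul_mem_mul
      (Ideal.pow_mem_pow (hm ▸ Ideal.mem_span_singleton_self m₀) q)
      (pow_card_residueField_sub_mem t)
  simpa [hfactor, hnil] using hmem

theorem mem_span_X_C_pow_of_forall_eval_eq_zero (hn : m₀ ^ Nat.card (ResidueField R) ≠ 0)
    {f : R[X]} (hf : f.natDegree < Nat.card (ResidueField R))
    (h : ∀ z ∈ maximalIdeal R, f.eval z = 0) :
    f ∈ Ideal.span {X, C m₀} ^ (Nat.card (ResidueField R) + 1) := by
  have hcomp : f.comp (C m₀ * X) = 0 := by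
    refine eq_zero_of_forall_eval_zero_of_natDegree_lt_card ?_ fun t => ?_
    · have hlin : (C m₀ * X).natDegree ≤ 1 := (natDegree_C_mul_le _ _).trans natDegree_X_le
      exact natDegree_comp_le.trans_lt ((mul_le_of_le_one_right' hlin).trans_lt hf)
    · rw [eval_comp, eval_mul, eval_C, eval_X]
      exact h _ (Ideal.mul_mem_right t _ (hm ▸ Ideal.mem_span_singleton_self m₀))
  refine mem_span_X_C_pow_of_coeff_mem fun i => ?_
  rcases lt_or_ge i (Nat.card (ResidueField R)) with hi | hi
  · have hcoeff : m₀ ^ i * f.coeff i = 0 := by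
      rw [mul_comm, ← comp_C_mul_X_coeff, hcomp, coeff_zero]
    rw [Ideal.span_singleton_pow, ← Ideal.span_singleton_pow, ← hm]
    exact mem_maximalIdeal_pow_of_pow_mul_eq_zero hm hn (by omega) hcoeff
  · rw [coeff_eq_zero_of_natDegree_lt (hf.trans_le hi)]
    exact zero_mem _

end IsLocalRing

theorem statement_18_general {R : Type*} [CommRing R] [Finite R] [IsLocalRing R]
    (m₀ : R) (hm : maximalIdeal R = Ideal.span {m₀})
    (q : ℕ) (hq : Nat.card (ResidueField R) = q)
    (e : ℕ) (hnil : maximalIdeal R ^ e = ⊥)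
    (hnil' : maximalIdeal R ^ (e - 1) ≠ ⊥) (heq : e = q + 1) :
    zeroFunctions (maximalIdeal R : Set R) =
      (Ideal.span {(X : R[X]), C m₀}) ^ e ⊔
        Ideal.span {(X : R[X]) ^ q - C (m₀ ^ (q - 1)) * X} := by
  subst heq hq
  have : Finite (ResidueField R) := .of_surjective _ residue_surjective
  have hq : 1 < Nat.card (ResidueField R) := Finite.one_lt_card
  have hn : m₀ ^ Nat.card (ResidueField R) ≠ 0 := by
    simpa [hm, Ideal.span_singleton_pow] using hnil'
  set p : R[X] := X ^ Nat.card (ResidueField R) - C (m₀ ^ (Nat.card (ResidueField R) - 1)) * X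
  have hp : ∀ z ∈ maximalIdeal R, p.eval z = 0 := fun z => eval_X_pow_sub_C_mul_X_eq_zero hm hnil
  have hpmonic : p.Monic := monic_X_pow_sub_C_mul_X hq _
  have hpdeg : p.natDegree = Nat.card (ResidueField R) := natDegree_X_pow_sub_C_mul_X hq _
  apply le_antisymm
  · intro f hf
    rw [← modByMonic_add_div f p]
    refine Ideal.add_mem _ (Ideal.mem_sup_left ?_)
      (Ideal.mem_sup_right (Ideal.mul_mem_right _ _ (Ideal.mem_span_singleton_self p)))
    refine mem_span_X_C_pow_of_forall_eval_eq_zero hm hn ?_ fun z hz => ?_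
    · exact hpdeg ▸ natDegree_modByMonic_lt f hpmonic fun h => by simp [h] at hpdeg; omega
    · rw [modByMonic_eq_sub_mul_div, eval_sub, eval_mul, mem_zeroFunctions.mp hf z hz, hp z hz,
        zero_mul, sub_zero]
  · refine sup_le (fun f hf => mem_zeroFunctions.mpr fun z hz => ?_)
      ((Ideal.span_singleton_le_iff_mem _).mpr (mem_zeroFunctions.mpr hp))
    have hm₀ : m₀ ∈ maximalIdeal R := hm ▸ Ideal.mem_span_singleton_self m₀
    simpa [hnil] using eval_mem_pow_of_mem_span_X_C_pow hm₀ hz hf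

theorem statement_18 {R : Type*} [CommRing R] [Finite R] [IsLocalRing R]
    (m₀ : R) (hm : maximalIdeal R = Ideal.span {m₀})
    (q : ℕ) (hq : Nat.card (ResidueField R) = q)
    (e : ℕ) (he : 1 ≤ e) (hnil : maximalIdeal R ^ e = ⊥)
    (hnil' : maximalIdeal R ^ (e - 1) ≠ ⊥) (heq : e = q + 1) :
    zeroFunctions (maximalIdeal R : Set R) =
      (Ideal.span {(X : R[X]), C m₀}) ^ e ⊔
        Ideal.span {(X : R[X]) ^ q - C (m₀ ^ (q - 1)) * X} :=
  statement_18_general m₀ hm q hq e hnil hnil' heq
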